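/- Let n ≥ 2 and let A = (a_ij) be an (n+1)×(n+1) generalized Cartan matrix whose principal submatrix on the indices {1,…,n} is of type N_{n-1,n}. Then A is of type N_{n,n+1} if and only if the entries in the added row and column are not all zero and for each j ∈ {1,…,n} the pair (a_{n+1,j}, a_{j,n+1}) falls into one of the following cases: (0,0); (−1,−1); a_{n+1,j} = −1 and a_{j,n+1} ∈ {−2,−3,−4} (or symmetrically a_{j,n+1} = −1 and a_{n+1,j} ∈ {−2,−3,−4}); or (−2,−2). Equivalently, each 2×2 principal submatrix on indices {j, n+1} must be of finite or affine type, i.e., a_{n+1,j}·a_{j,n+1} ≤ 4. -/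

import Mathlib

/-- An `n × n` integer matrix is a generalized Cartan matrix (GCM). -/
def IsGCM {n : ℕ} (A : Matrix (Fin n) (Fin n) ℤ) : Prop :=
  (∀ i, A i i = 2) ∧ (∀ i j, i ≠ j → A i j ≤ 0) ∧ (∀ i j, A i j = 0 → A j i = 0)

/-- The graph on the index set of `A`, with an edge between `i ≠ j` whenever
`A i j ≠ 0` (stated symmetrically so as to be well-defined for all matrices;
for a GCM, `A i j ≠ 0 ↔ A j i ≠ 0`). -/
def gcmGraph {n : ℕ} (A : Matrix (Fin n) (Fin n) ℤ) : SimpleGraph (Fin n) where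
  Adj i j := i ≠ j ∧ (A i j ≠ 0 ∨ A j i ≠ 0)
  symm := ⟨fun i j h => ⟨h.1.symm, h.2.symm⟩⟩
  loopless := ⟨fun i h => h.1 rfl⟩

/-- A matrix is indecomposable (its diagram is connected). -/
def IsIndecomposable {n : ℕ} (A : Matrix (Fin n) (Fin n) ℤ) : Prop :=
  (gcmGraph A).Connected

/-- An indecomposable GCM is of finite type: there is `u > 0` with `A ⬝ u > 0`. -/
def IsFinType {n : ℕ} (A : Matrix (Fin n) (Fin n) ℤ) : Prop :=
  IsGCM A ∧ IsIndecomposable A ∧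
    ∃ u : Fin n → ℚ, (∀ i, 0 < u i) ∧ (∀ i, 0 < ∑ j, (A i j : ℚ) * u j)

/-- An indecomposable GCM is of affine type: there is `u > 0` with `A ⬝ u = 0`. -/
def IsAffType {n : ℕ} (A : Matrix (Fin n) (Fin n) ℤ) : Prop :=
  IsGCM A ∧ IsIndecomposable A ∧
    ∃ u : Fin n → ℚ, (∀ i, 0 < u i) ∧ (∀ i, ∑ j, (A i j : ℚ) * u j = 0)

/-- An indecomposable GCM is of indefinite type: there is `u > 0` with `A ⬝ u < 0`. -/
def IsIndefType {n : ℕ} (A : Matrix (Fin n) (Fin n) ℤ) : Prop :=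
  IsGCM A ∧ IsIndecomposable A ∧
    ∃ u : Fin n → ℚ, (∀ i, 0 < u i) ∧ (∀ i, ∑ j, (A i j : ℚ) * u j < 0)

/-- `B` is a principal submatrix of `A`: the restriction of `A` to a subset of
its index set (encoded by a strictly monotone map `Fin m → Fin n`). -/
def IsPrincipalSubmatrix {m n : ℕ} (B : Matrix (Fin m) (Fin m) ℤ)
    (A : Matrix (Fin n) (Fin n) ℤ) : Prop :=
  ∃ f : Fin m → Fin n, StrictMono f ∧ B = A.submatrix f f

/-- A proper principal submatrix: the corresponding subset is nonempty and proper. -/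
def IsProperPrincipalSubmatrix {m n : ℕ} (B : Matrix (Fin m) (Fin m) ℤ)
    (A : Matrix (Fin n) (Fin n) ℤ) : Prop :=
  IsPrincipalSubmatrix B A ∧ 0 < m ∧ m < n

/-- A GCM is of hyperbolic type: indecomposable, neither finite nor affine,
and every proper connected principal submatrix is of finite or affine type. -/
def IsHypType {n : ℕ} (A : Matrix (Fin n) (Fin n) ℤ) : Prop :=
  IsGCM A ∧ IsIndecomposable A ∧ ¬ IsFinType A ∧ ¬ IsAffType A ∧
    ∀ m, ∀ B : Matrix (Fin m) (Fin m) ℤ,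
      IsProperPrincipalSubmatrix B A → IsIndecomposable B →
        (IsFinType B ∨ IsAffType B)

/-- `N₀` = finite type, `N₁` = affine type, `N₂` = hyperbolic type; for `k ≥ 3`,
a GCM is of type `N_k` if it has a proper principal submatrix of type `N_{k-1}`
and every proper connected principal submatrix is of type `N_m` for some `m < k`. -/
def IsNType : (k : ℕ) → {n : ℕ} → Matrix (Fin n) (Fin n) ℤ → Prop
  | 0, _, A => IsFinType A
  | 1, _, A => IsAffType A
  | 2, _, A => IsHypType A
  | (k+3), _, A => IsGCM A ∧ IsIndecomposable A ∧
      (∃ m, ∃ B : Matrix (Fin m) (Fin m) ℤ,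
        IsProperPrincipalSubmatrix B A ∧ IsNType (k+2) B) ∧
      (∀ m, ∀ B : Matrix (Fin m) (Fin m) ℤ,
        IsProperPrincipalSubmatrix B A → IsIndecomposable B →
          ∃ m', ∃ _ : m' < k + 3, IsNType m' B)
  termination_by k => k

/-!
Every indecomposable GCM has exactly one type `N_k`, with `k` at most its dimension, and the type
strictly increases from a proper principal submatrix of type `≥ 1` to the whole matrix; this rests
on comparing positive vectors `u` with `A u ≥ 0`. A matrix of dimension `m ≥ 2` has type `N_m`
exactly when it has a pair with `a_ij a_ji > 4`: starting from such a hyperbolic `2 × 2` block and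
adding one neighbouring index at a time raises the type by one at each step.

Here the submatrix on `{1, …, n}` has type `n - 1 ≠ n`, so it has no such pair, and `A` has one
exactly when some added pair has product `> 4`. In that case `A` has type `n + 1`; otherwise its
type lies strictly between `n - 1` and `n + 1`. The listed cases are the pairs of nonpositive
integers, vanishing together, with product at most `4`.
-/

open Finset

namespace SimpleGraph

variable {V : Type*} {G : SimpleGraph V}

lemma Preconnected.exists_adj_mem_notMem (h : G.Preconnected) {S : Set V} {u v : V}
    (hu : u ∈ S) (hv : v ∉ S) : ∃ x y, x ∈ S ∧ y ∉ S ∧ G.Adj x y := by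
  obtain ⟨w⟩ := h u v
  obtain ⟨d, -, hd₁, hd₂⟩ := w.exists_boundary_dart S hu hv
  exact ⟨d.fst, d.snd, hd₁, hd₂, d.adj⟩

lemma Connected.induce_insert {S : Set V} (hS : (G.induce S).Connected) {v w : V}
    (hw : w ∈ S) (hvw : G.Adj v w) : (G.induce (insert v S)).Connected := by
  have hpair := induce_pair_connected_of_adj hvw
  have h := induce_union_connected hS.preconnected hpair.preconnected ⟨w, hw, by simp⟩
  rwa [show S ∪ {v, w} = insert v S by grind] at h

end SimpleGraph

section GCM

variable {m n : ℕ} {A : Matrix (Fin n) (Fin n) ℤ}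

lemma IsGCM.submatrix (hA : IsGCM A) {f : Fin m → Fin n} (hf : Function.Injective f) :
    IsGCM (A.submatrix f f) :=
  ⟨fun i => hA.1 (f i), fun _ _ hij => hA.2.1 _ _ (hf.ne hij), fun _ _ => hA.2.2 _ _⟩

lemma IsPrincipalSubmatrix.isGCM {B : Matrix (Fin m) (Fin m) ℤ}
    (hB : IsPrincipalSubmatrix B A) (hA : IsGCM A) : IsGCM B := by
  obtain ⟨f, hf, rfl⟩ := hB
  exact hA.submatrix hf.injective

lemma exists_notMem_range_of_lt {f : Fin m → Fin n} (h : m < n) : ∃ y, y ∉ Set.range f := by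
  by_contra! hf
  have := Fintype.card_le_of_surjective f hf
  simp only [Fintype.card_fin] at this
  omega

lemma IsGCM.neg_of_adj (hA : IsGCM A) {i j : Fin n} (h : (gcmGraph A).Adj i j) : A i j < 0 :=
  (hA.2.1 i j h.1).lt_of_ne fun h0 => h.2.elim (· h0) (· (hA.2.2 i j h0))

def gcmGraphSubmatrixEmbedding (A : Matrix (Fin n) (Fin n) ℤ) {f : Fin m → Fin n}
    (hf : Function.Injective f) : gcmGraph (A.submatrix f f) ↪g gcmGraph A where
  toFun := f
  inj' := hf
  map_rel_iff' := by simp [gcmGraph, hf.ne_iff]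

lemma isIndecomposable_submatrix_iff {f : Fin m → Fin n} (hf : Function.Injective f) :
    IsIndecomposable (A.submatrix f f) ↔ ((gcmGraph A).induce (Set.range f)).Connected :=
  (gcmGraphSubmatrixEmbedding A hf).isoInduceRange.connected_iff

end GCM

section Vectors

variable {m n : ℕ} {A : Matrix (Fin n) (Fin n) ℤ}

lemma IsGCM.exists_lower_at (hA : IsGCM A) {u : Fin n → ℚ} (hu : ∀ i, 0 < u i)
    (hAu : ∀ i, 0 ≤ ∑ j, (A i j : ℚ) * u j) {y : Fin n} (hy : 0 < ∑ j, (A y j : ℚ) * u j) :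
    ∃ u' : Fin n → ℚ, (∀ i, 0 < u' i) ∧ (∀ i, 0 ≤ ∑ j, (A i j : ℚ) * u' j) ∧
      ∀ i, (0 < ∑ j, (A i j : ℚ) * u j ∨ A i y < 0) → 0 < ∑ j, (A i j : ℚ) * u' j := by
  set δ : ℚ := min (u y / 2) ((∑ j, (A y j : ℚ) * u j) / 4)
  have hδ : 0 < δ := lt_min (by linarith [hu y]) (by linarith)
  set u' : Fin n → ℚ := u - Pi.single y δ
  have hsum : ∀ i, ∑ j, (A i j : ℚ) * u' j = ∑ j, (A i j : ℚ) * u j + (-A i y) * δ := by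
    intro i
    simp [u', mul_sub, Finset.sum_sub_distrib, Pi.single_apply]
    ring
  have hrow : ∀ i, 0 ≤ ∑ j, (A i j : ℚ) * u' j ∧
      ((0 < ∑ j, (A i j : ℚ) * u j ∨ A i y < 0) → 0 < ∑ j, (A i j : ℚ) * u' j) := by
    intro i
    rw [hsum]
    by_cases hiy : i = y
    · subst hiy
      have : δ ≤ (∑ j, (A i j : ℚ) * u j) / 4 := min_le_right _ _
      simp only [hA.1 i, Int.cast_ofNat]
      exact ⟨by linarith, fun _ => by linarith⟩
    · have hAiy : (0 : ℚ) ≤ -A i y := by exact_mod_cast neg_nonneg.2 (hA.2.1 i y hiy)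
      refine ⟨add_nonneg (hAu i) (mul_nonneg hAiy hδ.le), ?_⟩
      rintro (hi | hi)
      · exact add_pos_of_pos_of_nonneg hi (mul_nonneg hAiy hδ.le)
      · exact add_pos_of_nonneg_of_pos (hAu i) (mul_pos (by exact_mod_cast neg_pos.2 hi) hδ)
  refine ⟨u', fun i => ?_, fun i => (hrow i).1, fun i => (hrow i).2⟩
  by_cases hiy : i = y
  · subst hiy
    have : δ ≤ u i / 2 := min_le_left _ _
    simp only [u', Pi.sub_apply, Pi.single_eq_same]
    linarith [hu i]
  · simp [u', Pi.single_eq_of_ne hiy, hu i]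

lemma IsGCM.isFinType_of_sum_nonneg (hA : IsGCM A) (hc : IsIndecomposable A) {u : Fin n → ℚ}
    (hu : ∀ i, 0 < u i) (hAu : ∀ i, 0 ≤ ∑ j, (A i j : ℚ) * u j)
    (hpos : ∃ i, 0 < ∑ j, (A i j : ℚ) * u j) : IsFinType A := by
  refine ⟨hA, hc, ?_⟩
  -- induct on the number of rows where `A u` vanishes: lowering `u` at a positive row next to a
  -- vanishing one makes that row positive
  suffices key : ∀ k, ∀ u : Fin n → ℚ, (∀ i, 0 < u i) → (∀ i, 0 ≤ ∑ j, (A i j : ℚ) * u j) →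
      (∃ i, 0 < ∑ j, (A i j : ℚ) * u j) → #{i | ¬ 0 < ∑ j, (A i j : ℚ) * u j} ≤ k →
      ∃ u : Fin n → ℚ, (∀ i, 0 < u i) ∧ (∀ i, 0 < ∑ j, (A i j : ℚ) * u j) from
    key _ u hu hAu hpos le_rfl
  intro k
  induction k with
  | zero =>
    intro u hu _ _ hk
    refine ⟨u, hu, fun i => not_not.mp fun h => ?_⟩
    exact Finset.filter_eq_empty_iff.mp (Finset.card_eq_zero.mp (Nat.le_zero.mp hk)) (mem_univ i) h
  | succ k ih =>
    rintro u hu hAu ⟨y₀, hy₀⟩ hk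
    by_cases hall : ∀ i, 0 < ∑ j, (A i j : ℚ) * u j
    · exact ⟨u, hu, hall⟩
    obtain ⟨x₀, hx₀⟩ := not_forall.mp hall
    obtain ⟨x, y, hx, hy, hxy⟩ := hc.preconnected.exists_adj_mem_notMem
      (S := {i | ¬ 0 < ∑ j, (A i j : ℚ) * u j}) hx₀ (not_not.mpr hy₀)
    obtain ⟨u', hu', hAu', hpos'⟩ := hA.exists_lower_at hu hAu (not_not.mp hy)
    refine ih u' hu' hAu' ⟨y, hpos' y (.inl (not_not.mp hy))⟩
      (Nat.le_of_lt_succ (lt_of_lt_of_le ?_ hk))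
    refine Finset.card_lt_card (Finset.ssubset_iff_of_subset ?_ |>.mpr ⟨x, ?_, ?_⟩)
    · intro i
      simp only [Finset.mem_filter, Finset.mem_univ, true_and]
      exact mt fun h => hpos' i (.inl h)
    · simpa using hx
    · simpa using hpos' x (.inr (hA.neg_of_adj hxy))

lemma IsFinType.not_isAffType (hf : IsFinType A) : ¬ IsAffType A := by
  rintro ⟨-, -, w, hw, hAw⟩
  obtain ⟨hA, hc, u, hu, hAu⟩ := hf
  obtain ⟨i₀, -, hi₀⟩ := Finset.exists_min_image univ (fun i => u i / w i)
    (univ_nonempty_iff.mpr hc.nonempty)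
  -- `u - t w` is `≥ 0`, vanishes at `i₀`, and `A (u - t w) = A u > 0`
  set t := u i₀ / w i₀
  have hv : ∀ j, 0 ≤ u j - t * w j := fun j => by
    have := hi₀ j (mem_univ j)
    rw [div_le_div_iff₀ (hw i₀) (hw j)] at this
    rw [sub_nonneg, div_mul_eq_mul_div, div_le_iff₀ (hw i₀)]
    linarith
  have hv₀ : u i₀ - t * w i₀ = 0 := by
    rw [div_mul_cancel₀ _ (hw i₀).ne', sub_self]
  have hsum : ∑ j, (A i₀ j : ℚ) * (u j - t * w j) = ∑ j, (A i₀ j : ℚ) * u j := by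
    simp only [mul_sub, Finset.sum_sub_distrib, mul_left_comm _ t, ← Finset.mul_sum, hAw i₀,
      mul_zero, sub_zero]
  have hnonpos : ∑ j, (A i₀ j : ℚ) * (u j - t * w j) ≤ 0 := by
    refine Finset.sum_nonpos fun j _ => ?_
    by_cases hj : j = i₀
    · simp [hj, hv₀]
    · exact mul_nonpos_of_nonpos_of_nonneg (by exact_mod_cast hA.2.1 i₀ j (Ne.symm hj)) (hv j)
  linarith [hAu i₀]

lemma sum_submatrix_mul_comp (A : Matrix (Fin n) (Fin n) ℤ) {f : Fin m → Fin n}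
    (hf : Function.Injective f) (u : Fin n → ℚ) (i : Fin m) :
    ∑ j, (A.submatrix f f i j : ℚ) * u (f j)
      = ∑ j, (A (f i) j : ℚ) * u j - ∑ j ∈ (univ.image f)ᶜ, (A (f i) j : ℚ) * u j := by
  simp only [Matrix.submatrix_apply]
  rw [eq_sub_iff_add_eq, ← Finset.sum_image (f := fun j => (A (f i) j : ℚ) * u j)
    (fun x _ y _ h => hf h), Finset.sum_add_sum_compl]

lemma IsGCM.sum_compl_image_le (hA : IsGCM A) (f : Fin m → Fin n) {u : Fin n → ℚ}
    (hu : ∀ j, 0 ≤ u j) (i : Fin m) {T : Finset (Fin n)} (hT : T ⊆ (univ.image f)ᶜ) :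
    ∑ j ∈ (univ.image f)ᶜ, (A (f i) j : ℚ) * u j ≤ ∑ j ∈ T, (A (f i) j : ℚ) * u j := by
  refine Finset.sum_le_sum_of_subset_of_nonpos' hT fun j hj _ => ?_
  have hne : f i ≠ j := by rintro rfl; simp at hj
  exact mul_nonpos_of_nonpos_of_nonneg (by exact_mod_cast hA.2.1 _ _ hne) (hu j)

variable {B : Matrix (Fin m) (Fin m) ℤ}

lemma IsFinType.of_isPrincipalSubmatrix (hA : IsFinType A) (hB : IsPrincipalSubmatrix B A)
    (hc : IsIndecomposable B) : IsFinType B := by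
  obtain ⟨hA, -, u, hu, hAu⟩ := hA
  obtain ⟨f, hf, rfl⟩ := hB
  refine ⟨hA.submatrix hf.injective, hc, u ∘ f, fun i => hu (f i), fun i => ?_⟩
  have := hA.sum_compl_image_le f (fun j => (hu j).le) i (Finset.empty_subset _)
  rw [Function.comp_def, sum_submatrix_mul_comp A hf.injective]
  simp only [Finset.sum_empty] at this
  linarith [hAu (f i)]

lemma IsAffType.isFinType_of_isProperPrincipalSubmatrix (hA : IsAffType A)
    (hB : IsProperPrincipalSubmatrix B A) (hc : IsIndecomposable B) : IsFinType B := by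
  obtain ⟨hA, hAc, u, hu, hAu⟩ := hA
  obtain ⟨⟨f, hf, rfl⟩, hm, hmn⟩ := hB
  have hsum : ∀ i, ∑ j, (A.submatrix f f i j : ℚ) * u (f j)
      = -∑ j ∈ (univ.image f)ᶜ, (A (f i) j : ℚ) * u j := fun i => by
    rw [sum_submatrix_mul_comp A hf.injective, hAu, zero_sub]
  refine (hA.submatrix hf.injective).isFinType_of_sum_nonneg hc (u := u ∘ f) (fun i => hu (f i))
    (fun i => ?_) ?_
  · have := hA.sum_compl_image_le f (fun j => (hu j).le) i (Finset.empty_subset _)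
    simp only [Finset.sum_empty] at this
    simp only [Function.comp_apply, hsum]
    linarith
  · -- a row of `B` adjacent to an index outside the range of `f` has positive sum
    obtain ⟨y₀, hy₀⟩ := exists_notMem_range_of_lt (f := f) hmn
    obtain ⟨x, y, ⟨i, rfl⟩, hy, hxy⟩ :=
      hAc.preconnected.exists_adj_mem_notMem (Set.mem_range_self ⟨0, hm⟩) hy₀
    have hyT : {y} ⊆ (univ.image f)ᶜ := by simpa using hy
    have := hA.sum_compl_image_le f (fun j => (hu j).le) i hyT
    have hneg : (A (f i) y : ℚ) * u y < 0 :=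
      mul_neg_of_neg_of_pos (by exact_mod_cast hA.neg_of_adj hxy) (hu y)
    refine ⟨i, ?_⟩
    simp only [Function.comp_apply, hsum]
    simp only [Finset.sum_singleton] at this
    linarith

end Vectors

lemma IsGCM.isFinType_of_fin_one {M : Matrix (Fin 1) (Fin 1) ℤ} (hM : IsGCM M) : IsFinType M :=
  ⟨hM, ⟨fun u v => Subsingleton.elim u v ▸ .refl _⟩, fun _ => 1, fun _ => one_pos,
    fun i => by simp [Subsingleton.elim i 0, hM.1 0]⟩

section TwoByTwo

variable {B : Matrix (Fin 2) (Fin 2) ℤ}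

lemma IsGCM.mul_le_four_of_sum_nonneg (hB : IsGCM B) {u : Fin 2 → ℚ} (hu : ∀ i, 0 < u i)
    (hBu : ∀ i, 0 ≤ ∑ j, (B i j : ℚ) * u j) : B 0 1 * B 1 0 ≤ 4 := by
  have h0 := hBu 0
  have h1 := hBu 1
  simp only [Fin.sum_univ_two, hB.1, Int.cast_ofNat] at h0 h1
  have hx : (B 0 1 : ℚ) ≤ 0 := by exact_mod_cast hB.2.1 0 1 (by decide)
  have hy : (B 1 0 : ℚ) ≤ 0 := by exact_mod_cast hB.2.1 1 0 (by decide)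
  have hu0 := hu 0
  have hu1 := hu 1
  have : ((B 0 1 * B 1 0 : ℤ) : ℚ) ≤ 4 := by
    push_cast
    nlinarith [mul_nonneg (neg_nonneg.2 hx) hu1.le, mul_nonneg (neg_nonneg.2 hy) hu0.le,
      mul_pos hu0 hu1]
  exact_mod_cast this

lemma IsGCM.isFinType_or_isAffType_of_mul_le_four (hB : IsGCM B) (hc : IsIndecomposable B)
    (h : B 0 1 * B 1 0 ≤ 4) : IsFinType B ∨ IsAffType B := by
  obtain ⟨v, hv⟩ := hc.preconnected.exists_adj_of_nontrivial 0
  obtain rfl : v = 1 := by fin_cases v; exacts [absurd rfl hv.1, rfl]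
  have hx : (B 0 1 : ℚ) < 0 := by exact_mod_cast hB.neg_of_adj hv
  have hy : (B 1 0 : ℚ) ≤ 0 := by exact_mod_cast hB.2.1 1 0 (by decide)
  -- one vector serves both cases: `B u` is a positive multiple of `4 - a₀₁ a₁₀`
  set u : Fin 2 → ℚ := ![-4 * B 0 1, B 0 1 * B 1 0 + 4]
  have hu : ∀ i, 0 < u i := fun i => by fin_cases i <;> simp [u] <;> nlinarith
  have hBu : ∀ i, ∑ j, (B i j : ℚ) * u j = ![-B 0 1, 2] i * (4 - B 0 1 * B 1 0) := fun i => by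
    fin_cases i <;> simp [u, Fin.sum_univ_two, hB.1] <;> ring
  have hq : ((B 0 1 * B 1 0 : ℤ) : ℚ) ≤ 4 := by exact_mod_cast h
  push_cast at hq
  rcases hq.lt_or_eq with hlt | heq
  · refine .inl ⟨hB, hc, u, hu, fun i => ?_⟩
    rw [hBu]
    fin_cases i <;> simp <;> nlinarith
  · refine .inr ⟨hB, hc, u, hu, fun i => ?_⟩
    rw [hBu, heq, sub_self, mul_zero]

lemma IsGCM.isHypType_iff (hB : IsGCM B) : IsHypType B ↔ 4 < B 0 1 * B 1 0 := by
  constructor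
  · rintro ⟨-, hc, hfin, haff, -⟩
    by_contra! h
    exact (hB.isFinType_or_isAffType_of_mul_le_four hc h).elim hfin haff
  · intro h
    have hc : IsIndecomposable B := by
      have hadj : (gcmGraph B).Adj 0 1 := ⟨by decide, .inl (by rintro h0; simp [h0] at h)⟩
      exact ⟨fun u v => by
        fin_cases u <;> fin_cases v <;> simp [hadj.reachable, hadj.symm.reachable]⟩
    have hle : IsFinType B ∨ IsAffType B → B 0 1 * B 1 0 ≤ 4 := by
      rintro (⟨-, -, u, hu, hBu⟩ | ⟨-, -, u, hu, hBu⟩)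
      exacts [hB.mul_le_four_of_sum_nonneg hu fun i => (hBu i).le,
        hB.mul_le_four_of_sum_nonneg hu fun i => (hBu i).ge]
    refine ⟨hB, hc, fun hf => ?_, fun ha => ?_, fun m B' hB' _ => .inl ?_⟩
    · exact absurd (hle (.inl hf)) (not_le.2 h)
    · exact absurd (hle (.inr ha)) (not_le.2 h)
    · obtain rfl : m = 1 := by have := hB'.2; omega
      exact (hB'.1.isGCM hB).isFinType_of_fin_one

end TwoByTwo

section NType

variable {k m n : ℕ} {M : Matrix (Fin n) (Fin n) ℤ} {B : Matrix (Fin m) (Fin m) ℤ}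

lemma isNType_zero : IsNType 0 M ↔ IsFinType M := by rw [IsNType]

lemma isNType_one : IsNType 1 M ↔ IsAffType M := by rw [IsNType]

lemma isNType_two : IsNType 2 M ↔ IsHypType M := by rw [IsNType]

lemma IsNType.isGCM (h : IsNType k M) : IsGCM M := by
  rcases k with _ | _ | _ | k <;> rw [IsNType] at h <;> exact h.1

lemma IsNType.isIndecomposable (h : IsNType k M) : IsIndecomposable M := by
  rcases k with _ | _ | _ | k <;> rw [IsNType] at h <;> exact h.2.1

lemma IsNType.exists_lt_of_isProperPrincipalSubmatrix (h : IsNType k M) (hk : 1 ≤ k)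
    (hB : IsProperPrincipalSubmatrix B M) (hc : IsIndecomposable B) : ∃ t < k, IsNType t B := by
  rcases k with _ | _ | _ | k
  · omega
  · exact ⟨0, by omega, isNType_zero.2 <|
      (isNType_one.1 h).isFinType_of_isProperPrincipalSubmatrix hB hc⟩
  · rcases (isNType_two.1 h).2.2.2.2 _ _ hB hc with hf | ha
    exacts [⟨0, by omega, isNType_zero.2 hf⟩, ⟨1, by omega, isNType_one.2 ha⟩]
  · rw [IsNType] at h
    obtain ⟨t, ht, hBt⟩ := h.2.2.2 _ _ hB hc
    exact ⟨t, ht, hBt⟩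

lemma IsNType.not_isFinType (h : IsNType k M) (hk : 1 ≤ k) : ¬ IsFinType M := by
  induction k using Nat.strong_induction_on generalizing n with
  | _ k ih =>
    rcases k with _ | _ | _ | k
    · omega
    · exact fun hf => hf.not_isAffType (isNType_one.1 h)
    · exact (isNType_two.1 h).2.2.1
    · rw [IsNType] at h
      obtain ⟨-, -, ⟨m, B, hB, hBk⟩, -⟩ := h
      exact fun hf => ih (k + 2) (by omega) hBk (by omega)
        (hf.of_isPrincipalSubmatrix hB.1 hBk.isIndecomposable)

lemma IsNType.not_isAffType (h : IsNType k M) (hk : 2 ≤ k) : ¬ IsAffType M := by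
  rcases k with _ | _ | _ | k
  · omega
  · omega
  · exact (isNType_two.1 h).2.2.2.1
  · rw [IsNType] at h
    obtain ⟨-, -, ⟨m, B, hB, hBk⟩, -⟩ := h
    exact fun ha => hBk.not_isFinType (by omega)
      (ha.isFinType_of_isProperPrincipalSubmatrix hB hBk.isIndecomposable)

lemma IsNType.unique {l : ℕ} (hk : IsNType k M) (hl : IsNType l M) : k = l := by
  induction n using Nat.strong_induction_on generalizing k l with
  | _ n ih =>
    wlog hkl : k < l generalizing k l
    · rcases (not_lt.1 hkl).lt_or_eq with h | h
      exacts [(this hl hk h).symm, h.symm]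
    exfalso
    rcases k with _ | k
    · exact hl.not_isFinType (by omega) (isNType_zero.1 hk)
    rcases l with _ | _ | _ | l
    · omega
    · omega
    · obtain rfl : k = 0 := by omega
      exact hl.not_isAffType le_rfl (isNType_one.1 hk)
    -- a proper principal submatrix of type `l + 2` would have type `< k + 1 ≤ l + 2`
    rw [IsNType] at hl
    obtain ⟨-, -, ⟨m, B, hB, hBl⟩, -⟩ := hl
    obtain ⟨t, ht, hBt⟩ :=
      hk.exists_lt_of_isProperPrincipalSubmatrix (by omega) hB hBl.isIndecomposable
    have := ih m hB.2.2 hBt hBl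
    omega

lemma IsNType.le_dim (h : IsNType k M) : k ≤ n := by
  induction k using Nat.strong_induction_on generalizing n with
  | _ k ih =>
    have hn : 0 < n := Fin.pos_iff_nonempty.2 h.isIndecomposable.nonempty
    rcases k with _ | _ | _ | k
    · omega
    · omega
    · by_contra! hn2
      obtain rfl : n = 1 := by omega
      exact (isNType_two.1 h).2.2.1 h.isGCM.isFinType_of_fin_one
    · rw [IsNType] at h
      obtain ⟨-, -, ⟨m, B, hB, hBk⟩, -⟩ := h
      have := ih (k + 2) (by omega) hBk
      have := hB.2.2
      omega

lemma IsNType.lt_of_isProperPrincipalSubmatrix {s t : ℕ} (hB : IsNType t B) (ht : 1 ≤ t)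
    (hBM : IsProperPrincipalSubmatrix B M) (hM : IsNType s M) : t < s := by
  rcases Nat.eq_zero_or_pos s with rfl | hs
  · exact absurd ((isNType_zero.1 hM).of_isPrincipalSubmatrix hBM.1 hB.isIndecomposable)
      (hB.not_isFinType ht)
  · obtain ⟨t', ht', hBt'⟩ :=
      hM.exists_lt_of_isProperPrincipalSubmatrix hs hBM hB.isIndecomposable
    exact hB.unique hBt' ▸ ht'

theorem exists_isNType (hM : IsGCM M) (hc : IsIndecomposable M) : ∃ k, IsNType k M := by
  classical
  induction n using Nat.strong_induction_on with
  | _ n ih =>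
    by_cases hfin : IsFinType M
    · exact ⟨0, isNType_zero.2 hfin⟩
    by_cases haff : IsAffType M
    · exact ⟨1, isNType_one.2 haff⟩
    set K := Nat.findGreatest
      (fun t => ∃ m, ∃ B : Matrix (Fin m) (Fin m) ℤ, IsProperPrincipalSubmatrix B M ∧ IsNType t B) n
    have hK : ∀ m, ∀ B : Matrix (Fin m) (Fin m) ℤ, IsProperPrincipalSubmatrix B M →
        IsIndecomposable B → ∃ t ≤ K, IsNType t B := by
      intro m B hB hBc
      obtain ⟨t, ht⟩ := ih m hB.2.2 (hB.1.isGCM hM) hBc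
      exact ⟨t, Nat.le_findGreatest (ht.le_dim.trans hB.2.2.le) ⟨m, B, hB, ht⟩, ht⟩
    rcases le_or_gt K 1 with hK1 | hK1
    · refine ⟨2, isNType_two.2 ⟨hM, hc, hfin, haff, fun m B hB hBc => ?_⟩⟩
      obtain ⟨t, ht, hBt⟩ := hK m B hB hBc
      replace ht : t ≤ 1 := ht.trans hK1
      interval_cases t
      exacts [.inl (isNType_zero.1 hBt), .inr (isNType_one.1 hBt)]
    · obtain ⟨m, B, hB, hBK⟩ := Nat.findGreatest_of_ne_zero (m := K) rfl (by omega)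
      obtain ⟨j, hj⟩ : ∃ j, K = j + 2 := ⟨K - 2, by omega⟩
      refine ⟨j + 3, ?_⟩
      rw [IsNType]
      refine ⟨hM, hc, ⟨m, B, hB, hj ▸ hBK⟩, fun m B hB hBc => ?_⟩
      obtain ⟨t, ht, hBt⟩ := hK m B hB hBc
      exact ⟨t, by omega, hBt⟩

lemma IsGCM.isNType_succ_of_isProperPrincipalSubmatrix {M : Matrix (Fin (k + 1)) (Fin (k + 1)) ℤ}
    (hM : IsGCM M) (hc : IsIndecomposable M) (hB : IsProperPrincipalSubmatrix B M)
    (hBk : IsNType k B) (hk : 1 ≤ k) : IsNType (k + 1) M := by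
  obtain ⟨s, hs⟩ := exists_isNType hM hc
  have h₁ := hBk.lt_of_isProperPrincipalSubmatrix hk hB hs
  have h₂ := hs.le_dim
  obtain rfl : s = k + 1 := by omega
  exact hs

end NType

section HyperbolicPair

variable {m n : ℕ} {A : Matrix (Fin n) (Fin n) ℤ}

/-- The `2 × 2` principal submatrix of `A` on `{i, j}` is hyperbolic (`IsGCM.isHypType_iff`). -/
def HasHyperbolicPair (A : Matrix (Fin n) (Fin n) ℤ) : Prop := ∃ i j, 4 < A i j * A j i

lemma IsNType.hasHyperbolicPair (h : IsNType n A) (hn : 2 ≤ n) : HasHyperbolicPair A := by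
  induction n using Nat.strong_induction_on with
  | _ n ih =>
    obtain ⟨k, rfl⟩ : ∃ k, n = k + 2 := ⟨n - 2, by omega⟩
    rcases k with _ | k
    · exact ⟨0, 1, h.isGCM.isHypType_iff.1 (isNType_two.1 h)⟩
    rw [IsNType] at h
    obtain ⟨-, -, ⟨m, B, hB, hBk⟩, -⟩ := h
    obtain rfl : m = k + 2 := by have := hBk.le_dim; have := hB.2.2; omega
    obtain ⟨i, j, hij⟩ := ih _ (by omega) hBk (by omega)
    obtain ⟨f, -, rfl⟩ := hB.1
    exact ⟨f i, f j, hij⟩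

lemma isPrincipalSubmatrix_submatrix_of_range_subset (A : Matrix (Fin n) (Fin n) ℤ) {a b : ℕ}
    {f : Fin a → Fin n} {f' : Fin b → Fin n} (hf : StrictMono f) (hf' : StrictMono f')
    (h : Set.range f ⊆ Set.range f') :
    IsPrincipalSubmatrix (A.submatrix f f) (A.submatrix f' f') := by
  choose g hg using fun i => h (Set.mem_range_self i)
  refine ⟨g, fun i j hij => hf'.lt_iff_lt.1 ?_, ?_⟩
  · rw [hg, hg]
    exact hf hij
  · ext i j
    simp [hg]

lemma IsGCM.exists_isNType_succ (hA : IsGCM A) (hc : IsIndecomposable A) {j : ℕ} (hj : 1 ≤ j)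
    (hjn : j < n) {f : Fin j → Fin n} (hf : StrictMono f) (hfj : IsNType j (A.submatrix f f)) :
    ∃ f' : Fin (j + 1) → Fin n, StrictMono f' ∧ IsNType (j + 1) (A.submatrix f' f') := by
  obtain ⟨y, hy⟩ := exists_notMem_range_of_lt (f := f) hjn
  obtain ⟨x, v, ⟨i, rfl⟩, hv, hxv⟩ :=
    hc.preconnected.exists_adj_mem_notMem (Set.mem_range_self ⟨0, hj⟩) hy
  have hS : (insert v (univ.image f)).card = j + 1 := by
    rw [card_insert_of_notMem (by simpa using hv), card_image_of_injective _ hf.injective,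
      card_univ, Fintype.card_fin]
  set f' := (insert v (univ.image f)).orderEmbOfFin hS
  have hrange : Set.range f' = insert v (Set.range f) := by
    simp [f', range_orderEmbOfFin]
  have hc' : IsIndecomposable (A.submatrix f' f') := by
    rw [isIndecomposable_submatrix_iff f'.injective, hrange]
    exact ((isIndecomposable_submatrix_iff hf.injective).1 hfj.isIndecomposable).induce_insert
      (Set.mem_range_self i) hxv.symm
  have hsub : IsProperPrincipalSubmatrix (A.submatrix f f) (A.submatrix f' f') :=
    ⟨isPrincipalSubmatrix_submatrix_of_range_subset A hf f'.strictMono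
      (hrange ▸ Set.subset_insert _ _), by omega, by omega⟩
  exact ⟨f', f'.strictMono,
    (hA.submatrix f'.injective).isNType_succ_of_isProperPrincipalSubmatrix hc' hsub hfj hj⟩

lemma HasHyperbolicPair.isNType (h : HasHyperbolicPair A) (hA : IsGCM A)
    (hc : IsIndecomposable A) : IsNType n A := by
  obtain ⟨p, q, hpq⟩ := h
  wlog hlt : p < q generalizing p q
  · rcases (not_lt.1 hlt).lt_or_eq with h | rfl
    · exact this q p (by linarith) h
    · simp [hA.1] at hpq
  have hchain : ∀ j, 2 ≤ j → j ≤ n →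
      ∃ f : Fin j → Fin n, StrictMono f ∧ IsNType j (A.submatrix f f) := by
    intro j hj hjn
    induction j, hj using Nat.le_induction with
    | base =>
      have hmono : StrictMono ![p, q] := Fin.strictMono_iff_lt_succ.2 fun i => by fin_cases i; simpa
      exact ⟨_, hmono, isNType_two.2 ((hA.submatrix hmono.injective).isHypType_iff.2 (by simpa))⟩
    | succ j hj ih =>
      obtain ⟨f, hf, hfj⟩ := ih (by omega)
      exact hA.exists_isNType_succ hc (by omega) hjn hf hfj
  obtain ⟨f, hf, hfn⟩ := hchain n (by have := q.isLt; have : p.val < q.val := hlt; omega) le_rfl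
  rwa [hf.eq_id, Matrix.submatrix_id_id] at hfn

end HyperbolicPair

section Extension

variable {n : ℕ} {A : Matrix (Fin (n + 1)) (Fin (n + 1)) ℤ}

lemma isIndecomposable_iff_of_submatrix_castSucc
    (hC : IsIndecomposable (A.submatrix Fin.castSucc Fin.castSucc)) :
    IsIndecomposable A ↔
      ¬ ∀ j : Fin n, A (Fin.last n) j.castSucc = 0 ∧ A j.castSucc (Fin.last n) = 0 := by
  obtain ⟨j₀⟩ := hC.nonempty
  constructor
  · intro hc hz
    have : Nontrivial (Fin (n + 1)) := ⟨⟨_, _, (Fin.castSucc_lt_last j₀).ne⟩⟩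
    obtain ⟨c, hc⟩ := hc.preconnected.exists_adj_of_nontrivial (Fin.last n)
    induction c using Fin.lastCases with
    | last => exact hc.1 rfl
    | cast j => exact hc.2.elim (· (hz j).1) (· (hz j).2)
  · intro h
    obtain ⟨j, hj⟩ := not_forall.1 h
    have hadj : (gcmGraph A).Adj (Fin.last n) j.castSucc :=
      ⟨(Fin.castSucc_lt_last j).ne', by tauto⟩
    have := ((isIndecomposable_submatrix_iff (Fin.castSucc_injective n)).1 hC).induce_insert
      (Set.mem_range_self j) hadj
    rw [← Matrix.submatrix_id_id A, isIndecomposable_submatrix_iff Function.injective_id,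
      Set.range_id]
    rwa [show insert (Fin.last n) (Set.range Fin.castSucc) = Set.univ from
      Set.eq_univ_of_forall fun i => by induction i using Fin.lastCases <;> simp] at this

lemma hasHyperbolicPair_iff_of_submatrix_castSucc (hA : IsGCM A) :
    HasHyperbolicPair A ↔ HasHyperbolicPair (A.submatrix Fin.castSucc Fin.castSucc) ∨
      ∃ j : Fin n, 4 < A (Fin.last n) j.castSucc * A j.castSucc (Fin.last n) := by
  constructor
  · rintro ⟨i, j, hij⟩
    induction i using Fin.lastCases <;> induction j using Fin.lastCases
    · simp [hA.1] at hij
    · exact .inr ⟨_, hij⟩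
    · exact .inr ⟨_, by rwa [mul_comm]⟩
    · exact .inl ⟨_, _, hij⟩
  · rintro (⟨i, j, hij⟩ | ⟨j, hj⟩)
    exacts [⟨_, _, hij⟩, ⟨_, _, hj⟩]

end Extension

lemma mul_le_four_iff_of_nonpos {x y : ℤ} (hx : x ≤ 0) (hy : y ≤ 0) (hxy : x = 0 ↔ y = 0) :
    x * y ≤ 4 ↔
      (x = 0 ∧ y = 0) ∨ (x = -1 ∧ y = -1) ∨ (x = -1 ∧ (y = -2 ∨ y = -3 ∨ y = -4)) ∨
        (y = -1 ∧ (x = -2 ∨ x = -3 ∨ x = -4)) ∨ (x = -2 ∧ y = -2) := by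
  constructor
  · intro h
    rcases hx.lt_or_eq with hx' | rfl
    · have hy' : y < 0 := hy.lt_of_ne fun h0 => hx'.ne (hxy.2 h0)
      have : -4 ≤ x := by nlinarith
      have : -4 ≤ y := by nlinarith
      interval_cases x <;> interval_cases y <;> omega
    · simp_all
  · rintro (⟨rfl, rfl⟩ | ⟨rfl, rfl⟩ | ⟨rfl, rfl | rfl | rfl⟩ | ⟨rfl, rfl | rfl | rfl⟩ |
      ⟨rfl, rfl⟩) <;> norm_num

/-- Theorem 3.2 of the paper: let `n ≥ 2` and let `A` be an
`(n+1) × (n+1)` GCM whose principal submatrix on the first `n` indices is of type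
`N_{n-1,n}`. Then `A` is of type `N_{n,n+1}` if and only if the added entries are
not all zero and, for each `j`, the pair `(A (last) j, A j (last))` is one of
`(0,0)`, `(-1,-1)`, `(-1, -2)`, `(-1, -3)`, `(-1, -4)` (in either order), or `(-2,-2)`. -/
theorem isNType_succ_iff_added_entries {n : ℕ} (hn : 2 ≤ n)
    {A : Matrix (Fin (n + 1)) (Fin (n + 1)) ℤ} (hA : IsGCM A)
    (hsub : IsNType (n - 1) (A.submatrix Fin.castSucc Fin.castSucc)) :
    IsNType n A ↔
      ((¬ ∀ j : Fin n, A (Fin.last n) j.castSucc = 0 ∧ A j.castSucc (Fin.last n) = 0) ∧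
        ∀ j : Fin n,
          (A (Fin.last n) j.castSucc = 0 ∧ A j.castSucc (Fin.last n) = 0) ∨
          (A (Fin.last n) j.castSucc = -1 ∧ A j.castSucc (Fin.last n) = -1) ∨
          (A (Fin.last n) j.castSucc = -1 ∧
            (A j.castSucc (Fin.last n) = -2 ∨ A j.castSucc (Fin.last n) = -3 ∨
              A j.castSucc (Fin.last n) = -4)) ∨
          (A j.castSucc (Fin.last n) = -1 ∧
            (A (Fin.last n) j.castSucc = -2 ∨ A (Fin.last n) j.castSucc = -3 ∨
              A (Fin.last n) j.castSucc = -4)) ∨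
          (A (Fin.last n) j.castSucc = -2 ∧ A j.castSucc (Fin.last n) = -2)) := by
  have hne : ∀ j : Fin n, j.castSucc ≠ Fin.last n := fun j => (Fin.castSucc_lt_last j).ne
  have hcases := fun j : Fin n => mul_le_four_iff_of_nonpos (hA.2.1 _ _ (hne j).symm)
    (hA.2.1 _ _ (hne j)) ⟨hA.2.2 _ _, hA.2.2 _ _⟩
  have hC : ¬ HasHyperbolicPair (A.submatrix Fin.castSucc Fin.castSucc) := fun h => by
    have := (h.isNType hsub.isGCM hsub.isIndecomposable).unique hsub
    omega
  have hpairs : ¬ HasHyperbolicPair A ↔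
      ∀ j : Fin n, A (Fin.last n) j.castSucc * A j.castSucc (Fin.last n) ≤ 4 := by
    simp [hasHyperbolicPair_iff_of_submatrix_castSucc hA, hC]
  rw [← isIndecomposable_iff_of_submatrix_castSucc hsub.isIndecomposable,
    ← forall_congr' hcases, ← hpairs]
  constructor
  · intro hA'
    refine ⟨hA'.isIndecomposable, fun h => ?_⟩
    have := (h.isNType hA hA'.isIndecomposable).unique hA'
    omega
  · rintro ⟨hc, hno⟩
    obtain ⟨s, hs⟩ := exists_isNType hA hc
    have h₁ : n - 1 < s := hsub.lt_of_isProperPrincipalSubmatrix (by omega)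
      ⟨⟨Fin.castSucc, Fin.strictMono_castSucc, rfl⟩, by omega, by omega⟩ hs
    have h₂ : s ≠ n + 1 := by
      rintro rfl
      exact hno (hs.hasHyperbolicPair (by omega))
    obtain rfl : s = n := by have := hs.le_dim; omega
    exact hs
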